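/- arXiv:1010.2241 — 5 statements merged into one kernel-verified Lean document; each statement's English description precedes it below -/
import Mathlib

section
/- Let f : ℝⁿ → ℝⁿ, and let x : ℝ → ℝⁿ, x⋆ : ℝ → ℝⁿ, z : ℝ → ℝⁿ, τ : ℝ → ℝ be functions. Fix t₀ ∈ ℝ and set τ₀ = τ(t₀). Assume: (i) x is differentiable at t₀ with x′(t₀) = f(x(t₀)); (ii) τ is differentiable at t₀; (iii) x⋆ is differentiable at τ₀ with (x⋆)′(τ₀) = f(x⋆(τ₀)); (iv) z is differentiable at τ₀; (v) the orthogonality condition ⟨z(τ(t)), x(t) − x⋆(τ(t))⟩ = 0 holds for all t in a neighborhood of t₀; (vi) the quantity d := ⟨z(τ₀), f(x⋆(τ₀))⟩ − ⟨z′(τ₀), x(t₀) − x⋆(τ₀)⟩ is nonzero. Then τ′(t₀) = ⟨z(τ₀), f(x(t₀))⟩ / d. -/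
open scoped RealInnerProductSpace

/-
Differentiate the orthogonality condition `⟪z(τ t), x t − x⋆(τ t)⟫ = 0` at `t₀` with the chain
and product rules. Since the left side vanishes near `t₀`, so does its derivative
`⟪z(τ₀), ẋ(t₀)⟫ − τ̇(t₀) (⟪z(τ₀), ẋ⋆(τ₀)⟫ − ⟪ż(τ₀), x(t₀) − x⋆(τ₀)⟫)`, which is linear in `τ̇(t₀)`;
solving for `τ̇(t₀)` gives the formula.
-/

section PhaseCondition

variable {E : Type*} [NormedAddCommGroup E] [InnerProductSpace ℝ E]
  {x xstar z : ℝ → E} {τ : ℝ → ℝ} {t₀ τ' : ℝ} {x' xstar' z' : E}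

theorem hasDerivAt_inner_sub_comp_phase (hτ : HasDerivAt τ τ' t₀) (hx : HasDerivAt x x' t₀)
    (hxs : HasDerivAt xstar xstar' (τ t₀)) (hz : HasDerivAt z z' (τ t₀)) :
    HasDerivAt (fun t => ⟪z (τ t), x t - xstar (τ t)⟫)
      (⟪z (τ t₀), x'⟫ - τ' * (⟪z (τ t₀), xstar'⟫ - ⟪z', x t₀ - xstar (τ t₀)⟫)) t₀ := by
  refine ((hz.scomp t₀ hτ).inner ℝ (hx.sub (hxs.scomp t₀ hτ))).congr_deriv ?_
  simp only [Function.comp_apply, Pi.sub_apply, inner_sub_right, inner_smul_right,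
    real_inner_smul_left]
  ring

theorem phase_derivative_mul_eq (hτ : HasDerivAt τ τ' t₀) (hx : HasDerivAt x x' t₀)
    (hxs : HasDerivAt xstar xstar' (τ t₀)) (hz : HasDerivAt z z' (τ t₀))
    (horth : ∀ᶠ t in nhds t₀, ⟪z (τ t), x t - xstar (τ t)⟫ = 0) :
    τ' * (⟪z (τ t₀), xstar'⟫ - ⟪z', x t₀ - xstar (τ t₀)⟫) = ⟪z (τ t₀), x'⟫ := by
  have hzero : HasDerivAt (fun t => ⟪z (τ t), x t - xstar (τ t)⟫) 0 t₀ :=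
    (hasDerivAt_const t₀ (0 : ℝ)).congr_of_eventuallyEq horth
  have := (hasDerivAt_inner_sub_comp_phase hτ hx hxs hz).unique hzero
  linarith

end PhaseCondition

/-- The formula for `τ̇` in Theorem 1 (equation (14)) of the paper: if `x` solves
`ẋ = f(x)`, `x⋆` is a solution of the same system, and the phase `τ(t)` satisfies the
orthogonality condition `⟪z(τ(t)), x(t) − x⋆(τ(t))⟫ = 0` near `t₀`, then, provided the
denominator `d` is nonzero,
`τ′(t₀) = ⟪z(τ₀), f(x(t₀))⟫ / (⟪z(τ₀), f(x⋆(τ₀))⟫ − ⟪z′(τ₀), x(t₀) − x⋆(τ₀)⟫)`. -/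
theorem phase_derivative_formula
    (n : ℕ) (f : EuclideanSpace ℝ (Fin n) → EuclideanSpace ℝ (Fin n))
    (x xstar z : ℝ → EuclideanSpace ℝ (Fin n)) (τ : ℝ → ℝ)
    (t₀ τ₀ : ℝ) (hτ₀ : τ₀ = τ t₀)
    (hx : HasDerivAt x (f (x t₀)) t₀)
    (hτ : DifferentiableAt ℝ τ t₀)
    (hxs : HasDerivAt xstar (f (xstar τ₀)) τ₀)
    (zdot : EuclideanSpace ℝ (Fin n)) (hz : HasDerivAt z zdot τ₀)
    (horth : ∀ᶠ t in nhds t₀, ⟪z (τ t), x t - xstar (τ t)⟫ = 0)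
    (d : ℝ) (hd : d = ⟪z τ₀, f (xstar τ₀)⟫ - ⟪zdot, x t₀ - xstar τ₀⟫)
    (hdne : d ≠ 0) :
    deriv τ t₀ = ⟪z τ₀, f (x t₀)⟫ / d := by
  subst hτ₀ hd
  rw [eq_div_iff hdne]
  exact phase_derivative_mul_eq hτ.hasDerivAt hx hxs hz horth
end

section
/- Let n ≥ 2, let f : ℝⁿ → ℝⁿ, and let x : ℝ → ℝⁿ, x⋆ : ℝ → ℝⁿ, τ : ℝ → ℝ, and Π : ℝ → ℝ^{(n−1)×n} (matrix-valued) be functions. Fix t₀ ∈ ℝ and set τ₀ = τ(t₀). Assume: (i) x is differentiable at t₀ with x′(t₀) = f(x(t₀)); (ii) τ is differentiable at t₀; (iii) x⋆ is differentiable at τ₀ with (x⋆)′(τ₀) = f(x⋆(τ₀)); (iv) Π is differentiable at τ₀, with derivative Π′(τ₀); (v) defining x_⊥(t) = Π(τ(t)) (x(t) − x⋆(τ(t))), the reconstruction identity x(t) − x⋆(τ(t)) = Π(τ(t))ᵀ x_⊥(t) holds for all t in a neighborhood of t₀. Then x_⊥ is differentiable at t₀ with x_⊥′(t₀) = τ′(t₀)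 Π′(τ₀) Π(τ₀)ᵀ x_⊥(t₀) + Π(τ₀) f( x⋆(τ₀) + Π(τ₀)ᵀ x_⊥(t₀) ) − Π(τ₀) f(x⋆(τ₀)) τ′(t₀). -/
/-!
Differentiate `x_⊥(t) = Π(τ(t)) (x(t) − x⋆(τ(t)))` by the product and chain rules: its derivative
at `t₀` is `τ' Π'(τ₀) (x(t₀) − x⋆(τ₀)) + Π(τ₀) (f(x(t₀)) − τ' f(x⋆(τ₀)))`. The reconstruction
identity at `t₀` replaces `x(t₀) − x⋆(τ₀)` by `Π(τ₀)ᵀ x_⊥(t₀)`, which gives the formula.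
-/

open scoped RealInnerProductSpace

/-- Matrix–vector multiplication as a map between Euclidean spaces. -/
noncomputable def mulVecE {m n : ℕ} (A : Matrix (Fin m) (Fin n) ℝ)
    (v : EuclideanSpace ℝ (Fin n)) : EuclideanSpace ℝ (Fin m) :=
  (EuclideanSpace.equiv (Fin m) ℝ).symm (A.mulVec (EuclideanSpace.equiv (Fin n) ℝ v))

lemma hasDerivAt_euclidean {ι : Type*} [Fintype ι] {v : ℝ → EuclideanSpace ℝ ι}
    {v' : EuclideanSpace ℝ ι} {t : ℝ} :
    HasDerivAt v v' t ↔ ∀ i, HasDerivAt (fun s => v s i) (v' i) t := by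
  refine ⟨fun h i => (EuclideanSpace.proj (𝕜 := ℝ) i).hasFDerivAt.comp_hasDerivAt t h,
    fun h => ?_⟩
  exact (PiLp.hasFDerivAt_toLp 2 _).comp_hasDerivAt t (hasDerivAt_pi.2 h)

section mulVecE

variable {m n : ℕ}

lemma mulVecE_eq_toLpLin (A : Matrix (Fin m) (Fin n) ℝ) (v : EuclideanSpace ℝ (Fin n)) :
    mulVecE A v = Matrix.toLpLin 2 2 A v :=
  (rfl)

lemma mulVecE_apply (A : Matrix (Fin m) (Fin n) ℝ) (v : EuclideanSpace ℝ (Fin n)) (i : Fin m) :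
    mulVecE A v i = ∑ j, A i j * v j := by
  simp [mulVecE, Matrix.mulVec, dotProduct]

lemma mulVecE_sub (A : Matrix (Fin m) (Fin n) ℝ) (u v : EuclideanSpace ℝ (Fin n)) :
    mulVecE A (u - v) = mulVecE A u - mulVecE A v := by
  simp only [mulVecE_eq_toLpLin, map_sub]

lemma mulVecE_smul (A : Matrix (Fin m) (Fin n) ℝ) (c : ℝ) (v : EuclideanSpace ℝ (Fin n)) :
    mulVecE A (c • v) = c • mulVecE A v := by
  simp only [mulVecE_eq_toLpLin, map_smul]

lemma smul_mulVecE (c : ℝ) (A : Matrix (Fin m) (Fin n) ℝ) (v : EuclideanSpace ℝ (Fin n)) :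
    mulVecE (c • A) v = c • mulVecE A v := by
  simp only [mulVecE_eq_toLpLin, map_smul, LinearMap.smul_apply]

lemma mulVecE_mulVecE {k : ℕ} (A : Matrix (Fin m) (Fin n) ℝ) (B : Matrix (Fin n) (Fin k) ℝ)
    (v : EuclideanSpace ℝ (Fin k)) :
    mulVecE A (mulVecE B v) = mulVecE (A * B) v := by
  simp only [mulVecE_eq_toLpLin, Matrix.toLpLin_mul_same, LinearMap.comp_apply]

theorem HasDerivAt.mulVecE {A : ℝ → Matrix (Fin m) (Fin n) ℝ} {A' : Matrix (Fin m) (Fin n) ℝ}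
    {v : ℝ → EuclideanSpace ℝ (Fin n)} {v' : EuclideanSpace ℝ (Fin n)} {t : ℝ}
    (hA : ∀ i j, HasDerivAt (fun s => A s i j) (A' i j) t) (hv : HasDerivAt v v' t) :
    HasDerivAt (fun s => _root_.mulVecE (A s) (v s))
      (_root_.mulVecE A' (v t) + _root_.mulVecE (A t) v') t := by
  rw [hasDerivAt_euclidean] at hv ⊢
  intro i
  simp only [PiLp.add_apply, mulVecE_apply, ← Finset.sum_add_distrib]
  exact HasDerivAt.fun_sum fun j _ => (hA i j).mul (hv j)

end mulVecE

theorem transverse_coordinate_dynamics_general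
    (n : ℕ)
    (f : EuclideanSpace ℝ (Fin n) → EuclideanSpace ℝ (Fin n))
    (x xstar : ℝ → EuclideanSpace ℝ (Fin n)) (τ : ℝ → ℝ)
    (Pmat : ℝ → Matrix (Fin (n - 1)) (Fin n) ℝ)
    (t₀ τ₀ : ℝ) (hτ₀ : τ₀ = τ t₀)
    (hx : HasDerivAt x (f (x t₀)) t₀)
    (τ' : ℝ) (hτ : HasDerivAt τ τ' t₀)
    (hxs : HasDerivAt xstar (f (xstar τ₀)) τ₀)
    (Pmat' : Matrix (Fin (n - 1)) (Fin n) ℝ)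
    (hP : ∀ i j, HasDerivAt (fun s => Pmat s i j) (Pmat' i j) τ₀)
    (xperp : ℝ → EuclideanSpace ℝ (Fin (n - 1)))
    (hxperp : ∀ t, xperp t = mulVecE (Pmat (τ t)) (x t - xstar (τ t)))
    (hrecon : ∀ᶠ t in nhds t₀,
      x t - xstar (τ t) = mulVecE (Pmat (τ t)).transpose (xperp t)) :
    HasDerivAt xperp
      (τ' • mulVecE (Pmat' * (Pmat τ₀).transpose) (xperp t₀)
        + mulVecE (Pmat τ₀) (f (xstar τ₀ + mulVecE (Pmat τ₀).transpose (xperp t₀)))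
        - τ' • mulVecE (Pmat τ₀) (f (xstar τ₀))) t₀ := by
  subst hτ₀
  have hPτ : ∀ i j, HasDerivAt (fun t => Pmat (τ t) i j) ((τ' • Pmat') i j) t₀ := fun i j => by
    simpa [Function.comp_def, mul_comm] using (hP i j).comp t₀ hτ
  have hdiff : HasDerivAt (fun t => x t - xstar (τ t))
      (f (x t₀) - τ' • f (xstar (τ t₀))) t₀ :=
    hx.sub (hxs.scomp t₀ hτ)
  have hrec₀ : x t₀ - xstar (τ t₀) = mulVecE (Pmat (τ t₀)).transpose (xperp t₀) :=
    hrecon.self_of_nhds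
  have hx₀ : x t₀ = xstar (τ t₀) + mulVecE (Pmat (τ t₀)).transpose (xperp t₀) :=
    eq_add_of_sub_eq' hrec₀
  have hderiv := (HasDerivAt.mulVecE hPτ hdiff).congr_of_eventuallyEq (.of_forall hxperp)
  rwa [hrec₀, hx₀, smul_mulVecE, mulVecE_mulVecE, mulVecE_sub, mulVecE_smul, ← add_sub_assoc]
    at hderiv

/-- The formula for `ẋ_⊥` in Theorem 1 (equation (12)) of the paper: with
`x_⊥(t) = Π(τ(t))(x(t) − x⋆(τ(t)))` and the reconstruction identity
`x(t) − x⋆(τ(t)) = Π(τ(t))ᵀ x_⊥(t)` holding near `t₀`,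
`ẋ_⊥ = τ̇ Π′(τ₀)Π(τ₀)ᵀ x_⊥ + Π(τ₀) f(x⋆(τ₀) + Π(τ₀)ᵀ x_⊥) − Π(τ₀) f(x⋆(τ₀)) τ̇`. -/
theorem transverse_coordinate_dynamics
    (n : ℕ) (hn : 2 ≤ n)
    (f : EuclideanSpace ℝ (Fin n) → EuclideanSpace ℝ (Fin n))
    (x xstar : ℝ → EuclideanSpace ℝ (Fin n)) (τ : ℝ → ℝ)
    (Pmat : ℝ → Matrix (Fin (n - 1)) (Fin n) ℝ)
    (t₀ τ₀ : ℝ) (hτ₀ : τ₀ = τ t₀)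
    (hx : HasDerivAt x (f (x t₀)) t₀)
    (τ' : ℝ) (hτ : HasDerivAt τ τ' t₀)
    (hxs : HasDerivAt xstar (f (xstar τ₀)) τ₀)
    (Pmat' : Matrix (Fin (n - 1)) (Fin n) ℝ)
    (hP : ∀ i j, HasDerivAt (fun s => Pmat s i j) (Pmat' i j) τ₀)
    (xperp : ℝ → EuclideanSpace ℝ (Fin (n - 1)))
    (hxperp : ∀ t, xperp t = mulVecE (Pmat (τ t)) (x t - xstar (τ t)))
    (hrecon : ∀ᶠ t in nhds t₀,
      x t - xstar (τ t) = mulVecE (Pmat (τ t)).transpose (xperp t)) :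
    HasDerivAt xperp
      (τ' • mulVecE (Pmat' * (Pmat τ₀).transpose) (xperp t₀)
        + mulVecE (Pmat τ₀) (f (xstar τ₀ + mulVecE (Pmat τ₀).transpose (xperp t₀)))
        - τ' • mulVecE (Pmat τ₀) (f (xstar τ₀))) t₀ :=
  transverse_coordinate_dynamics_general n f x xstar τ Pmat t₀ τ₀ hτ₀ hx τ' hτ hxs Pmat' hP xperp
    hxperp hrecon
end

section
/- Let m ≥ 1 and T > 0. Let F : ℝᵐ × ℝ → ℝᵐ and G : ℝᵐ × ℝ → ℝ be continuous and T-periodic in their second argument, and let V : ℝᵐ × ℝ → ℝ be continuously differentiable and T-periodic in its second argument. Assume: (i) the set D := { (x,τ) : τ ∈ [0,T], V(x,τ) ≤ 1 } is compact; (ii) V(x,τ) > 0 whenever x ≠ 0, and V(0,τ) = 0 for all τ; (iii) the Lie derivative L(x,τ) := ⟨∇ₓV(x,τ), F(x,τ)⟩ + (∂V/∂τ)(x,τ) · G(x,τ) satisfies L(x,τ) < 0 whenever V(x,τ) ≤ 1 and x ≠ 0, and L(0,τ) = 0 for all τ. Then for every continuously differentiable curve (x̂, τ̂) : [0,∞)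 → ℝᵐ × ℝ satisfying x̂′(t) = F(x̂(t), τ̂(t)) and τ̂′(t) = G(x̂(t), τ̂(t)) for all t ≥ 0 with V(x̂(0), τ̂(0)) ≤ 1, one has V(x̂(t), τ̂(t)) ≤ 1 for all t ≥ 0, and x̂(t) → 0 as t → ∞. -/
/-!
Along a solution, `W t = V (x̂ t, τ̂ t)` has derivative `L (x̂ t, τ̂ t)`, which is negative whenever
`W t = c` for a level `0 < c ≤ 1` (then `x̂ t ≠ 0`); hence every sublevel set `{W ≤ c}` is
forward invariant. Periodicity lets us fold `τ` into `[0, T]`, so the solution stays in the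
compact set `D`. There `L ≤ -δ` on `{η ≤ V}`, so `W` falls below every level `η > 0` in finite
time and stays below it, i.e. `W → 0`; and `V` is bounded below by a positive constant on
`D ∩ {ε ≤ ‖x‖}`, which forces `x̂ → 0`.
-/

open Filter Set Topology Function

theorem le_of_hasDerivAt_neg_of_eq {W W' : ℝ → ℝ} {a c : ℝ}
    (hW : ∀ t ≥ a, HasDerivAt W (W' t) t) (ha : W a ≤ c)
    (hneg : ∀ t ≥ a, W t = c → W' t < 0) : ∀ t ≥ a, W t ≤ c := fun _ ht =>
  image_le_of_deriv_right_lt_deriv_boundary'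
    (fun s hs => (hW s hs.1).continuousAt.continuousWithinAt)
    (fun s hs => (hW s hs.1).hasDerivWithinAt) ha continuousOn_const
    (fun _ _ => hasDerivWithinAt_const _ _ c) (fun s hs => hneg s hs.1) ⟨ht, le_rfl⟩

theorem exists_lt_of_hasDerivAt_le_neg {W W' : ℝ → ℝ} {a η δ : ℝ} (hδ : 0 < δ)
    (hW : ∀ t ≥ a, HasDerivAt W (W' t) t) (hW0 : ∀ t ≥ a, 0 ≤ W t)
    (hdec : ∀ t ≥ a, η ≤ W t → W' t ≤ -δ) : ∃ t ≥ a, W t < η := by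
  by_contra! hη
  set b := a + (W a + 1) / δ
  have hab : a ≤ b := le_add_of_nonneg_right (div_nonneg (by linarith [hW0 a le_rfl]) hδ.le)
  have hline : W b ≤ W a - δ * (b - a) :=
    image_le_of_deriv_right_le_deriv_boundary
      (fun s hs => (hW s hs.1).continuousAt.continuousWithinAt)
      (fun s hs => (hW s hs.1).hasDerivWithinAt) (by simp) (by fun_prop)
      (fun s _ => ((hasDerivAt_id s).sub_const a |>.const_mul δ |>.const_sub (W a)).hasDerivWithinAt)
      (fun s hs => by simpa using hdec s hs.1 (hη s hs.1)) ⟨hab, le_rfl⟩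
  have : δ * (b - a) = W a + 1 := by simp only [b]; field_simp; ring
  linarith [hW0 b hab]

theorem tendsto_zero_of_hasDerivAt_le_neg {W W' : ℝ → ℝ} {a : ℝ}
    (hW : ∀ t ≥ a, HasDerivAt W (W' t) t) (hW0 : ∀ t ≥ a, 0 ≤ W t)
    (hdec : ∀ η > 0, ∃ δ > 0, ∀ t ≥ a, η ≤ W t → W' t ≤ -δ) :
    Tendsto W atTop (𝓝 0) := by
  refine tendsto_order.2 ⟨fun ε hε => eventually_atTop.2 ⟨a, fun t ht => hε.trans_le (hW0 t ht)⟩,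
    fun ε hε => ?_⟩
  obtain ⟨δ, hδ, hdecη⟩ := hdec (ε / 2) (half_pos hε)
  obtain ⟨t₁, ht₁, hWt₁⟩ := exists_lt_of_hasDerivAt_le_neg hδ hW hW0 hdecη
  have hstay := le_of_hasDerivAt_neg_of_eq (fun t ht => hW t (ht₁.trans ht)) hWt₁.le
    fun t ht hWt => (hdecη t (ht₁.trans ht) hWt.ge).trans_lt (neg_neg_of_pos hδ)
  exact eventually_atTop.2 ⟨t₁, fun t ht => (hstay t ht).trans_lt (half_lt_self hε)⟩

section Compact

variable {X : Type*} [TopologicalSpace X] {K : Set X} {V : X → ℝ}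

theorem IsCompact.tendsto_lyapunov_zero (hK : IsCompact K) (hV : Continuous V) {L : X → ℝ}
    (hL : Continuous L) (hV_nonneg : ∀ p ∈ K, 0 ≤ V p) (hLneg : ∀ p ∈ K, 0 < V p → L p < 0)
    {γ : ℝ → X} {a : ℝ} (hγK : ∀ t ≥ a, γ t ∈ K)
    (hγ : ∀ t ≥ a, HasDerivAt (fun t => V (γ t)) (L (γ t)) t) :
    Tendsto (fun t => V (γ t)) atTop (𝓝 0) := by
  refine tendsto_zero_of_hasDerivAt_le_neg hγ (fun t ht => hV_nonneg _ (hγK t ht)) fun η hη => ?_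
  obtain ⟨δ, hδ, hLδ⟩ := (hK.inter_right (isClosed_Ici.preimage hV)).exists_forall_le'
    hL.neg.continuousOn fun p hp => neg_pos.2 (hLneg p hp.1 (hη.trans_le hp.2))
  exact ⟨δ, hδ, fun t ht hηt => le_neg.1 (hLδ _ ⟨hγK t ht, hηt⟩)⟩

theorem IsCompact.tendsto_zero_of_tendsto_lyapunov {E ι : Type*} [SeminormedAddGroup E]
    (hK : IsCompact K) (hV : Continuous V) {f : X → E} (hf : Continuous f)
    (hpos : ∀ p ∈ K, f p ≠ 0 → 0 < V p) {l : Filter ι} {γ : ι → X}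
    (hγK : ∀ᶠ i in l, γ i ∈ K) (hVγ : Tendsto (fun i => V (γ i)) l (𝓝 0)) :
    Tendsto (fun i => f (γ i)) l (𝓝 0) := by
  refine NormedAddGroup.tendsto_nhds_zero.2 fun ε hε => ?_
  obtain ⟨η, hη, hVη⟩ := (hK.inter_right (isClosed_le continuous_const hf.norm)).exists_forall_le'
    hV.continuousOn fun p hp => hpos p hp.1 fun h0 => by
      simpa [h0] using hε.trans_le hp.2
  filter_upwards [hγK, hVγ.eventually (eventually_lt_nhds hη)] with i hiK hiV
  by_contra! hi
  exact (hVη _ ⟨hiK, hi⟩).not_gt hiV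

end Compact

section Periodic

theorem Function.Periodic.fderiv {𝕜 E F : Type*} [NontriviallyNormedField 𝕜]
    [NormedAddCommGroup E] [NormedSpace 𝕜 E] [NormedAddCommGroup F] [NormedSpace 𝕜 F]
    {f : E → F} {c : E} (h : Periodic f c) : Periodic (fderiv 𝕜 f) c := fun x => by
  rw [← fderiv_comp_add_right, h.funext]

variable {E β : Type*} [AddCommGroup E] {T : ℝ}

theorem periodic_prod_zero_iff {f : E × ℝ → β} :
    Periodic f ((0 : E), T) ↔ ∀ x τ, f (x, τ + T) = f (x, τ) := by
  simp [Periodic, Prod.forall]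

theorem Function.Periodic.apply_toIcoMod_snd {f : E × ℝ → β} (h : Periodic f ((0 : E), T))
    (hT : 0 < T) (x : E) (τ : ℝ) : f (x, toIcoMod hT 0 τ) = f (x, τ) := by
  have : ((x, toIcoMod hT 0 τ) : E × ℝ) = (x, τ) - toIcoDiv hT 0 τ • ((0 : E), T) := by
    rw [← self_sub_toIcoDiv_zsmul]
    ext <;> simp
  rw [this, h.sub_zsmul_eq]

end Periodic

theorem lyapunov_region_of_orbital_stability_general
    (m : ℕ) (T : ℝ) (hT : 0 < T)
    (F : EuclideanSpace ℝ (Fin m) × ℝ → EuclideanSpace ℝ (Fin m))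
    (G : EuclideanSpace ℝ (Fin m) × ℝ → ℝ)
    (hF : Continuous F) (hG : Continuous G)
    (hFper : ∀ x τ, F (x, τ + T) = F (x, τ))
    (hGper : ∀ x τ, G (x, τ + T) = G (x, τ))
    (V : EuclideanSpace ℝ (Fin m) × ℝ → ℝ)
    (hV : ContDiff ℝ 1 V)
    (hVper : ∀ x τ, V (x, τ + T) = V (x, τ))
    (hD : IsCompact {p : EuclideanSpace ℝ (Fin m) × ℝ |
      p.2 ∈ Set.Icc (0 : ℝ) T ∧ V p ≤ 1})
    (hVpos : ∀ x τ, x ≠ 0 → 0 < V (x, τ))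
    (hV0 : ∀ τ, V (0, τ) = 0)
    (hL : ∀ x τ, V (x, τ) ≤ 1 → x ≠ 0 →
      fderiv ℝ V (x, τ) (F (x, τ), G (x, τ)) < 0)
    (xh : ℝ → EuclideanSpace ℝ (Fin m)) (τh : ℝ → ℝ)
    (hxd : ∀ t, 0 ≤ t → HasDerivAt xh (F (xh t, τh t)) t)
    (hτd : ∀ t, 0 ≤ t → HasDerivAt τh (G (xh t, τh t)) t)
    (h0 : V (xh 0, τh 0) ≤ 1) :
    (∀ t, 0 ≤ t → V (xh t, τh t) ≤ 1) ∧
    Filter.Tendsto xh Filter.atTop (nhds 0) := by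
  set D := {p : EuclideanSpace ℝ (Fin m) × ℝ | p.2 ∈ Set.Icc (0 : ℝ) T ∧ V p ≤ 1}
  set L : EuclideanSpace ℝ (Fin m) × ℝ → ℝ := fun p => fderiv ℝ V p (F p, G p)
  have hVperiodic := periodic_prod_zero_iff.2 hVper
  have hLper : Periodic L (0, T) := fun p => by
    simp only [L, hVperiodic.fderiv p, periodic_prod_zero_iff.2 hFper p,
      periodic_prod_zero_iff.2 hGper p]
  have hLcont : Continuous L := (hV.continuous_fderiv one_ne_zero).clm_apply (hF.prodMk hG)
  have hVnonneg : ∀ p, 0 ≤ V p := fun ⟨x, τ⟩ => by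
    rcases eq_or_ne x 0 with rfl | hx
    exacts [(hV0 τ).ge, (hVpos x τ hx).le]
  have hLneg : ∀ p, V p ≤ 1 → 0 < V p → L p < 0 := fun ⟨x, τ⟩ h1 hpos =>
    hL x τ h1 fun hx => by simp [hx, hV0] at hpos
  have hW : ∀ t ≥ 0, HasDerivAt (fun t => V (xh t, τh t)) (L (xh t, τh t)) t := fun t ht =>
    ((hV.differentiable one_ne_zero) _).hasFDerivAt.comp_hasDerivAt t
      ((hxd t ht).prodMk (hτd t ht))
  have hinv : ∀ t ≥ 0, V (xh t, τh t) ≤ 1 :=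
    le_of_hasDerivAt_neg_of_eq hW h0 fun t _ h1 => hLneg _ h1.le (h1 ▸ one_pos)
  set γ : ℝ → EuclideanSpace ℝ (Fin m) × ℝ := fun t => (xh t, toIcoMod hT 0 (τh t))
  have hγD : ∀ t ≥ 0, γ t ∈ D := fun t ht =>
    ⟨Ico_subset_Icc_self (toIcoMod_mem_Ico' hT _),
      (hVperiodic.apply_toIcoMod_snd hT _ _).trans_le (hinv t ht)⟩
  have hVγ : Tendsto (fun t => V (γ t)) atTop (𝓝 0) :=
    hD.tendsto_lyapunov_zero hV.continuous hLcont (fun p _ => hVnonneg p)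
      (fun p hp => hLneg p hp.2) hγD
      (by simpa only [γ, hVperiodic.apply_toIcoMod_snd, hLper.apply_toIcoMod_snd] using hW)
  exact ⟨hinv, hD.tendsto_zero_of_tendsto_lyapunov hV.continuous continuous_fst
    (fun p _ => hVpos p.1 p.2) (eventually_atTop.2 ⟨0, hγD⟩) hVγ⟩

/-- Theorem 2 of the paper, in transverse coordinates: if `V(x,τ)` is a `C¹`,
`T`-periodic (in `τ`) Lyapunov function for the transverse dynamics
`ẋ_⊥ = F(x_⊥, τ)`, `τ̇ = G(x_⊥, τ)` whose unit sublevel set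
`D = {(x,τ) : τ ∈ [0,T], V(x,τ) ≤ 1}` is compact, `V` is positive definite in `x`,
and the Lie derivative `L(x,τ) = DV(x,τ)[F(x,τ), G(x,τ)]` is negative for
`V(x,τ) ≤ 1`, `x ≠ 0`, and vanishes at `x = 0`, then every solution starting with
`V ≤ 1` stays in `V ≤ 1` and its transversal coordinate tends to `0`. -/
theorem lyapunov_region_of_orbital_stability
    (m : ℕ) (hm : 1 ≤ m) (T : ℝ) (hT : 0 < T)
    (F : EuclideanSpace ℝ (Fin m) × ℝ → EuclideanSpace ℝ (Fin m))
    (G : EuclideanSpace ℝ (Fin m) × ℝ → ℝ)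
    (hF : Continuous F) (hG : Continuous G)
    (hFper : ∀ x τ, F (x, τ + T) = F (x, τ))
    (hGper : ∀ x τ, G (x, τ + T) = G (x, τ))
    (V : EuclideanSpace ℝ (Fin m) × ℝ → ℝ)
    (hV : ContDiff ℝ 1 V)
    (hVper : ∀ x τ, V (x, τ + T) = V (x, τ))
    (hD : IsCompact {p : EuclideanSpace ℝ (Fin m) × ℝ |
      p.2 ∈ Set.Icc (0 : ℝ) T ∧ V p ≤ 1})
    (hVpos : ∀ x τ, x ≠ 0 → 0 < V (x, τ))
    (hV0 : ∀ τ, V (0, τ) = 0)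
    (hL : ∀ x τ, V (x, τ) ≤ 1 → x ≠ 0 →
      fderiv ℝ V (x, τ) (F (x, τ), G (x, τ)) < 0)
    (hL0 : ∀ τ, fderiv ℝ V (0, τ) (F (0, τ), G (0, τ)) = 0)
    (xh : ℝ → EuclideanSpace ℝ (Fin m)) (τh : ℝ → ℝ)
    (hxd : ∀ t, 0 ≤ t → HasDerivAt xh (F (xh t, τh t)) t)
    (hτd : ∀ t, 0 ≤ t → HasDerivAt τh (G (xh t, τh t)) t)
    (h0 : V (xh 0, τh 0) ≤ 1) :
    (∀ t, 0 ≤ t → V (xh t, τh t) ≤ 1) ∧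
    Filter.Tendsto xh Filter.atTop (nhds 0) :=
  lyapunov_region_of_orbital_stability_general m T hT F G hF hG hFper hGper V hV hVper hD hVpos hV0
    hL xh τh hxd hτd h0
end

section
/- Let m ≥ 1 and let A : ℝ → ℝ^{m×m}, P : ℝ → ℝ^{m×m}, H : ℝ → ℝ^{m×m} be matrix-valued functions with P differentiable with derivative P′, each P(τ) symmetric. Let h₀, p̄, q̄, C be positive constants. Assume for all τ ∈ ℝ and all x ∈ ℝᵐ: (i) ⟨x, (P′(τ) + A(τ)ᵀP(τ) + P(τ)A(τ)) x⟩ ≤ −⟨x, H(τ) x⟩; (ii) ⟨x, H(τ) x⟩ ≥ h₀‖x‖²; (iii) the operator norms satisfy ‖P(τ)‖ ≤ p̄ and ‖P′(τ)‖ ≤ q̄. Let h : ℝᵐ × ℝ → ℝᵐ and g : ℝᵐ × ℝ → ℝ satisfy ‖h(x,τ)‖ ≤ C‖x‖² and |g(x,τ)| ≤ C‖x‖ for all (x,τ). Set r := h₀ / (2C(q̄ + 2p̄)). Then for every differentiable curve (x,τ) : I → ℝᵐ × ℝ on an interval I satisfying x′(t) = A(τ(t)) x(t) + h(x(t), τ(t))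 and τ′(t) = 1 + g(x(t), τ(t)), and for every t ∈ I with ‖x(t)‖ ≤ r, the function v(t) := ⟨x(t), P(τ(t)) x(t)⟩ is differentiable at t with v′(t) ≤ −(h₀/2)‖x(t)‖². -/
/-!
Differentiating `v = ⟪x, P(τ) x⟫` along the flow gives the Lyapunov term
`⟪x, (P' + AᵀP + PA) x⟫ ≤ -h₀ ‖x‖²` plus the error terms `g ⟪x, P' x⟫` and `2 ⟪x, P h⟫`, which are
`O(‖x‖³)` with constants `C q̄` and `2 C p̄`; in the tube `‖x‖ ≤ r` they cost at most half of the
decay.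
-/

open scoped RealInnerProductSpace

section QuadraticForm

variable {E : Type*} [NormedAddCommGroup E] [InnerProductSpace ℝ E]

theorem HasDerivAt.inner_apply_self {x : ℝ → E} {x' : E} {Q : ℝ → E →L[ℝ] E}
    {Q' : E →L[ℝ] E} {t : ℝ} (hx : HasDerivAt x x' t) (hQ : HasDerivAt Q Q' t)
    (hsymm : (Q t : E →ₗ[ℝ] E).IsSymmetric) :
    HasDerivAt (fun s => ⟪x s, Q s (x s)⟫) (⟪x t, Q' (x t)⟫ + 2 * ⟪x t, Q t x'⟫) t := by
  refine (hx.inner ℝ (hQ.clm_apply hx)).congr_deriv ?_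
  have hswap : ⟪x', Q t (x t)⟫ = ⟪x t, Q t x'⟫ := by
    rw [real_inner_comm]
    exact hsymm _ _
  rw [inner_add_right, hswap]
  ring

theorem exists_hasDerivAt_inner_apply_self_le {x : ℝ → E} {τ : ℝ → ℝ}
    {Q : ℝ → E →L[ℝ] E} {Q' A : E →L[ℝ] E} {e : E} {δ h₀ p q C t : ℝ}
    (hx : HasDerivAt x (A (x t) + e) t) (hτ : HasDerivAt τ (1 + δ) t)
    (hQ : HasDerivAt Q Q' (τ t)) (hsymm : (Q (τ t) : E →ₗ[ℝ] E).IsSymmetric)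
    (hLyap : ⟪x t, Q' (x t)⟫ + 2 * ⟪x t, Q (τ t) (A (x t))⟫ ≤ -(h₀ * ‖x t‖ ^ 2))
    (hQb : ∀ v, ‖Q (τ t) v‖ ≤ p * ‖v‖) (hQ'b : ∀ v, ‖Q' v‖ ≤ q * ‖v‖)
    (he : ‖e‖ ≤ C * ‖x t‖ ^ 2) (hδ : |δ| ≤ C * ‖x t‖)
    (hC : 0 < C) (hp : 0 < p) (hq : 0 ≤ q) (hxt : ‖x t‖ ≤ h₀ / (2 * C * (q + 2 * p))) :
    ∃ v', HasDerivAt (fun s => ⟪x s, Q (τ s) (x s)⟫) v' t ∧ v' ≤ -(h₀ / 2) * ‖x t‖ ^ 2 := by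
  have hQτ : HasDerivAt (fun s => Q (τ s)) ((1 + δ) • Q') t := hQ.scomp t hτ
  refine ⟨_, hx.inner_apply_self hQτ hsymm, ?_⟩
  set n := ‖x t‖
  have hQ'x : |⟪x t, Q' (x t)⟫| ≤ q * n ^ 2 := calc
    |⟪x t, Q' (x t)⟫| ≤ n * ‖Q' (x t)‖ := abs_real_inner_le_norm _ _
    _ ≤ n * (q * n) := by gcongr; exact hQ'b _
    _ = q * n ^ 2 := by ring
  have hQe : ⟪x t, Q (τ t) e⟫ ≤ p * C * n ^ 3 := calc
    ⟪x t, Q (τ t) e⟫ ≤ n * ‖Q (τ t) e‖ := real_inner_le_norm _ _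
    _ ≤ n * (p * (C * n ^ 2)) := by gcongr; exact (hQb e).trans (by gcongr)
    _ = p * C * n ^ 3 := by ring
  have hδQ' : δ * ⟪x t, Q' (x t)⟫ ≤ C * n * (q * n ^ 2) := calc
    δ * ⟪x t, Q' (x t)⟫ ≤ |δ| * |⟪x t, Q' (x t)⟫| := by rw [← abs_mul]; exact le_abs_self _
    _ ≤ C * n * (q * n ^ 2) := mul_le_mul hδ hQ'x (abs_nonneg _) ((abs_nonneg _).trans hδ)
  -- The radius `h₀ / (2C(q + 2p))` is chosen so that the cubic error terms eat at most half of
  -- the decay `h₀ n²`.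
  have hr : C * (q + 2 * p) * n ≤ h₀ / 2 := by
    have hK : 0 < C * (q + 2 * p) := by positivity
    rw [le_div_iff₀ (by positivity)] at hxt
    nlinarith
  calc ⟪x t, ((1 + δ) • Q') (x t)⟫ + 2 * ⟪x t, Q (τ t) (A (x t) + e)⟫
      = (⟪x t, Q' (x t)⟫ + 2 * ⟪x t, Q (τ t) (A (x t))⟫) + δ * ⟪x t, Q' (x t)⟫
          + 2 * ⟪x t, Q (τ t) e⟫ := by
        simp only [smul_apply, map_add, inner_add_right, inner_smul_right]
        ring
    _ ≤ -(h₀ * n ^ 2) + C * n * (q * n ^ 2) + 2 * (p * C * n ^ 3) := by gcongr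
    _ = -(h₀ * n ^ 2) + C * (q + 2 * p) * n * n ^ 2 := by ring
    _ ≤ -(h₀ / 2) * n ^ 2 := by nlinarith [sq_nonneg n]

end QuadraticForm

namespace Matrix

variable {n : Type*} [Fintype n] [DecidableEq n]

theorem hasDerivAt_toEuclideanCLM {P : ℝ → Matrix n n ℝ} {P' : Matrix n n ℝ} {t : ℝ}
    (hP : ∀ i j, HasDerivAt (fun s => P s i j) (P' i j) t) :
    HasDerivAt (fun s => toEuclideanCLM (𝕜 := ℝ) (P s)) (toEuclideanCLM (𝕜 := ℝ) P') t := by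
  have expand : ∀ M : Matrix n n ℝ,
      toEuclideanCLM (𝕜 := ℝ) M = ∑ i, ∑ j, M i j • toEuclideanCLM (𝕜 := ℝ) (single i j 1) := by
    intro M
    conv_lhs => rw [matrix_eq_sum_single M]
    simp only [map_sum]
    refine Finset.sum_congr rfl fun i _ => Finset.sum_congr rfl fun j _ => ?_
    rw [← map_smul, smul_single, smul_eq_mul, mul_one]
  simp only [expand (P _), expand P']
  exact HasDerivAt.fun_sum fun i _ => HasDerivAt.fun_sum fun j _ =>
    (hP i j).smul_const (toEuclideanCLM (𝕜 := ℝ) (single i j 1))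

theorem isSymmetric_toEuclideanCLM {P : Matrix n n ℝ} (hP : Pᵀ = P) :
    (toEuclideanCLM (𝕜 := ℝ) P : EuclideanSpace ℝ n →ₗ[ℝ] EuclideanSpace ℝ n).IsSymmetric := by
  rw [coe_toEuclideanCLM_eq_toEuclideanLin, isSymmetric_toEuclideanLin_iff, IsHermitian,
    conjTranspose_eq_transpose_of_trivial, hP]

end Matrix

theorem mulVecE_eq_toEuclideanCLM {m : ℕ} (M : Matrix (Fin m) (Fin m) ℝ)
    (v : EuclideanSpace ℝ (Fin m)) : mulVecE M v = Matrix.toEuclideanCLM (𝕜 := ℝ) M v :=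
  rfl

theorem inner_mulVecE_lyapunov {m : ℕ} {A P P' : Matrix (Fin m) (Fin m) ℝ}
    (hP : P.transpose = P) (x : EuclideanSpace ℝ (Fin m)) :
    ⟪x, mulVecE (P' + A.transpose * P + P * A) x⟫ =
      ⟪x, mulVecE P' x⟫ + 2 * ⟪x, mulVecE P (mulVecE A x)⟫ := by
  have hAT : Matrix.toEuclideanCLM (𝕜 := ℝ) A.transpose =
      (Matrix.toEuclideanCLM (𝕜 := ℝ) A).adjoint := by
    rw [← Matrix.conjTranspose_eq_transpose_of_trivial, ← Matrix.star_eq_conjTranspose, map_star,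
      ContinuousLinearMap.star_eq_adjoint]
  have hPA : ⟪mulVecE P (mulVecE A x), x⟫ = ⟪mulVecE A x, mulVecE P x⟫ :=
    Matrix.isSymmetric_toEuclideanCLM hP _ _
  simp only [mulVecE_eq_toEuclideanCLM, map_add, map_mul, hAT, add_apply, mul_apply_eq_comp,
    inner_add_right, ContinuousLinearMap.adjoint_inner_right] at hPA ⊢
  rw [← hPA, real_inner_comm x]
  ring

theorem quadratic_lyapunov_decrease_in_tube_general
    (m : ℕ)
    (A P P' H : ℝ → Matrix (Fin m) (Fin m) ℝ)
    (hPderiv : ∀ τ i j, HasDerivAt (fun s => P s i j) (P' τ i j) τ)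
    (hPsymm : ∀ τ, (P τ).transpose = P τ)
    (h₀ pbar qbar C : ℝ)
    (hpbar : 0 < pbar) (hqbar : 0 < qbar) (hC : 0 < C)
    (hLyap : ∀ τ, ∀ x : EuclideanSpace ℝ (Fin m),
      ⟪x, mulVecE (P' τ + (A τ).transpose * P τ + P τ * A τ) x⟫ ≤
        -⟪x, mulVecE (H τ) x⟫)
    (hH : ∀ τ, ∀ x : EuclideanSpace ℝ (Fin m), h₀ * ‖x‖ ^ 2 ≤ ⟪x, mulVecE (H τ) x⟫)
    (hPbound : ∀ τ, ∀ x : EuclideanSpace ℝ (Fin m), ‖mulVecE (P τ) x‖ ≤ pbar * ‖x‖)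
    (hP'bound : ∀ τ, ∀ x : EuclideanSpace ℝ (Fin m), ‖mulVecE (P' τ) x‖ ≤ qbar * ‖x‖)
    (h : EuclideanSpace ℝ (Fin m) × ℝ → EuclideanSpace ℝ (Fin m))
    (g : EuclideanSpace ℝ (Fin m) × ℝ → ℝ)
    (hhb : ∀ x τ, ‖h (x, τ)‖ ≤ C * ‖x‖ ^ 2)
    (hgb : ∀ x τ, |g (x, τ)| ≤ C * ‖x‖)
    (r : ℝ) (hr : r = h₀ / (2 * C * (qbar + 2 * pbar)))
    (I : Set ℝ) (x : ℝ → EuclideanSpace ℝ (Fin m)) (τ : ℝ → ℝ)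
    (hxd : ∀ t ∈ I, HasDerivAt x (mulVecE (A (τ t)) (x t) + h (x t, τ t)) t)
    (hτd : ∀ t ∈ I, HasDerivAt τ (1 + g (x t, τ t)) t)
    (t : ℝ) (ht : t ∈ I) (hxt : ‖x t‖ ≤ r) :
    ∃ v' : ℝ, HasDerivAt (fun s => ⟪x s, mulVecE (P (τ s)) (x s)⟫) v' t ∧
      v' ≤ -(h₀ / 2) * ‖x t‖ ^ 2 := by
  have hLyap' : ⟪x t, mulVecE (P' (τ t)) (x t)⟫ +
      2 * ⟪x t, mulVecE (P (τ t)) (mulVecE (A (τ t)) (x t))⟫ ≤ -(h₀ * ‖x t‖ ^ 2) := by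
    rw [← inner_mulVecE_lyapunov (hPsymm (τ t))]
    linarith [hLyap (τ t) (x t), hH (τ t) (x t)]
  exact exists_hasDerivAt_inner_apply_self_le
    (Q := fun σ => Matrix.toEuclideanCLM (𝕜 := ℝ) (P σ))
    (A := Matrix.toEuclideanCLM (𝕜 := ℝ) (A (τ t)))
    (hxd t ht) (hτd t ht) (Matrix.hasDerivAt_toEuclideanCLM (hPderiv (τ t)))
    (Matrix.isSymmetric_toEuclideanCLM (hPsymm (τ t))) hLyap' (hPbound (τ t)) (hP'bound (τ t))
    (hhb _ _) (hgb _ _) hC hpbar hqbar.le (hr ▸ hxt)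

/-- The quantitative estimate underlying the implication 3 → 1 in Theorem 3 of the
paper: along the transverse dynamics `ẋ = A(τ)x + h(x,τ)`, `τ̇ = 1 + g(x,τ)` with
`‖h(x,τ)‖ ≤ C‖x‖²`, `|g(x,τ)| ≤ C‖x‖`, the quadratic Lyapunov function
`v(t) = ⟪x(t), P(τ(t))x(t)⟫` (with `P` satisfying the periodic Lyapunov inequality
`Ṗ + AᵀP + PA ≤ −H`, `H ≥ h₀ I`, `‖P‖ ≤ p̄`, `‖Ṗ‖ ≤ q̄`) satisfies
`v′(t) ≤ −(h₀/2)‖x(t)‖²` whenever `‖x(t)‖ ≤ r := h₀/(2C(q̄ + 2p̄))`. -/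
theorem quadratic_lyapunov_decrease_in_tube
    (m : ℕ) (hm : 1 ≤ m)
    (A P P' H : ℝ → Matrix (Fin m) (Fin m) ℝ)
    (hPderiv : ∀ τ i j, HasDerivAt (fun s => P s i j) (P' τ i j) τ)
    (hPsymm : ∀ τ, (P τ).transpose = P τ)
    (h₀ pbar qbar C : ℝ)
    (hh₀ : 0 < h₀) (hpbar : 0 < pbar) (hqbar : 0 < qbar) (hC : 0 < C)
    (hLyap : ∀ τ, ∀ x : EuclideanSpace ℝ (Fin m),
      ⟪x, mulVecE (P' τ + (A τ).transpose * P τ + P τ * A τ) x⟫ ≤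
        -⟪x, mulVecE (H τ) x⟫)
    (hH : ∀ τ, ∀ x : EuclideanSpace ℝ (Fin m), h₀ * ‖x‖ ^ 2 ≤ ⟪x, mulVecE (H τ) x⟫)
    (hPbound : ∀ τ, ∀ x : EuclideanSpace ℝ (Fin m), ‖mulVecE (P τ) x‖ ≤ pbar * ‖x‖)
    (hP'bound : ∀ τ, ∀ x : EuclideanSpace ℝ (Fin m), ‖mulVecE (P' τ) x‖ ≤ qbar * ‖x‖)
    (h : EuclideanSpace ℝ (Fin m) × ℝ → EuclideanSpace ℝ (Fin m))
    (g : EuclideanSpace ℝ (Fin m) × ℝ → ℝ)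
    (hhb : ∀ x τ, ‖h (x, τ)‖ ≤ C * ‖x‖ ^ 2)
    (hgb : ∀ x τ, |g (x, τ)| ≤ C * ‖x‖)
    (r : ℝ) (hr : r = h₀ / (2 * C * (qbar + 2 * pbar)))
    (I : Set ℝ) (x : ℝ → EuclideanSpace ℝ (Fin m)) (τ : ℝ → ℝ)
    (hxd : ∀ t ∈ I, HasDerivAt x (mulVecE (A (τ t)) (x t) + h (x t, τ t)) t)
    (hτd : ∀ t ∈ I, HasDerivAt τ (1 + g (x t, τ t)) t)
    (t : ℝ) (ht : t ∈ I) (hxt : ‖x t‖ ≤ r) :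
    ∃ v' : ℝ, HasDerivAt (fun s => ⟪x s, mulVecE (P (τ s)) (x s)⟫) v' t ∧
      v' ≤ -(h₀ / 2) * ‖x t‖ ^ 2 :=
  quadratic_lyapunov_decrease_in_tube_general m A P P' H hPderiv hPsymm h₀ pbar qbar C hpbar hqbar
    hC hLyap hH hPbound hP'bound h g hhb hgb r hr I x τ hxd hτd t ht hxt
end

section
/- Let δ > 0, let (t_k)_{k≥0} be a strictly increasing sequence of reals with t₀ = 0 and t_k → ∞, and let v : [0,∞) → ℝ be nonnegative. Assume: (i) on each interval [t_k, t_{k+1}), v is continuous, and on (t_k, t_{k+1}) it is differentiable with v′(t) ≤ −δ·v(t); (ii) at each jump time t_k with k ≥ 1, v(t_k) ≤ liminf_{t → t_k, t < t_k} v(t). Then v(t) ≤ v(0)·e^{−δ t} for all t ≥ 0. -/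
open Filter

/-- Decay on a single interval: if `v` is continuous on `[a,b)` and satisfies the
differential inequality on `(a,b)`, then `v s * e^{δ s} ≤ v a * e^{δ a}` on `[a,b)`. -/
lemma hybrid_decay_on_interval (δ : ℝ) (v : ℝ → ℝ) (a b : ℝ)
    (hc : ContinuousOn v (Set.Ico a b))
    (hd : ∀ s ∈ Set.Ioo a b, ∃ v' : ℝ, HasDerivAt v v' s ∧ v' ≤ -δ * v s) :
    ∀ s ∈ Set.Ico a b, v s * Real.exp (δ * s) ≤ v a * Real.exp (δ * a) := by
  intro s hs
  rcases eq_or_lt_of_le hs.1 with rfl | has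
  · exact le_refl _
  · set g : ℝ → ℝ := fun t => v t * Real.exp (δ * t) with hg
    have hanti : AntitoneOn g (Set.Icc a s) := by
      have hIcc : Set.Icc a s ⊆ Set.Ico a b := fun x hx => ⟨hx.1, lt_of_le_of_lt hx.2 hs.2⟩
      have hIoo : Set.Ioo a s ⊆ Set.Ioo a b := fun x hx => ⟨hx.1, lt_trans hx.2 hs.2⟩
      have hgc : ContinuousOn g (Set.Icc a s) :=
        (hc.mono hIcc).mul
          (Real.continuous_exp.comp (continuous_const.mul continuous_id)).continuousOn
      have hE : ∀ x : ℝ, HasDerivAt (fun t => Real.exp (δ * t)) (Real.exp (δ * x) * δ) x := by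
        intro x
        simpa using ((hasDerivAt_id x).const_mul δ).exp
      have hdif : DifferentiableOn ℝ g (interior (Set.Icc a s)) := by
        intro x hx
        rw [interior_Icc] at hx
        obtain ⟨v', hv', _⟩ := hd x (hIoo hx)
        exact (hv'.mul (hE x)).differentiableAt.differentiableWithinAt
      have hder : ∀ x ∈ interior (Set.Icc a s), deriv g x ≤ 0 := by
        intro x hx
        rw [interior_Icc] at hx
        obtain ⟨v', hv', hle⟩ := hd x (hIoo hx)
        have hG : HasDerivAt g (v' * Real.exp (δ * x) + v x * (Real.exp (δ * x) * δ)) x :=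
          hv'.mul (hE x)
        rw [hG.deriv]
        have hep := Real.exp_pos (δ * x)
        nlinarith
      exact antitoneOn_of_deriv_nonpos (convex_Icc a s) hgc hdif hder
    exact hanti ⟨le_refl a, le_of_lt has⟩ ⟨le_of_lt has, le_refl s⟩ (le_of_lt has)

/-- The scalar comparison lemma underlying Theorem 4 of the paper: if a nonnegative
function `v` is continuous on each interval `[t_k, t_{k+1})`, satisfies
`v′ ≤ −δ v` on each `(t_k, t_{k+1})`, and does not increase across the jump times
(`v(t_k) ≤ liminf_{t↑t_k} v(t)`), then `v(t) ≤ v(0) e^{−δt}` for all `t ≥ 0`. -/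
theorem hybrid_exponential_decay
    (δ : ℝ) (hδ : 0 < δ)
    (tk : ℕ → ℝ) (hmono : StrictMono tk) (ht0 : tk 0 = 0)
    (htop : Tendsto tk atTop atTop)
    (v : ℝ → ℝ) (hvnn : ∀ s, 0 ≤ s → 0 ≤ v s)
    (hcont : ∀ k, ContinuousOn v (Set.Ico (tk k) (tk (k + 1))))
    (hderiv : ∀ k, ∀ s ∈ Set.Ioo (tk k) (tk (k + 1)),
      ∃ v' : ℝ, HasDerivAt v v' s ∧ v' ≤ -δ * v s)
    (hjump : ∀ k, 1 ≤ k → v (tk k) ≤ liminf v (nhdsWithin (tk k) (Set.Iio (tk k)))) :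
    ∀ s, 0 ≤ s → v s ≤ v 0 * Real.exp (-δ * s) := by
  set C : ℕ → ℝ := fun k => v (tk k) * Real.exp (δ * tk k) with hC
  have hdec : ∀ k, ∀ s ∈ Set.Ico (tk k) (tk (k+1)), v s * Real.exp (δ * s) ≤ C k :=
    fun k => hybrid_decay_on_interval δ v (tk k) (tk (k+1)) (hcont k) (hderiv k)
  have hCk : ∀ k, C k ≤ v 0 := by
    intro k
    induction k with
    | zero => simp [hC, ht0]
    | succ k ih =>
      set a := tk k with ha
      set b := tk (k+1) with hb
      have hab : a < b := hmono (Nat.lt_succ_self k)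
      have ha0 : (0:ℝ) ≤ a := ht0 ▸ hmono.monotone (Nat.zero_le k)
      have hvev : ∀ᶠ t in nhdsWithin b (Set.Iio b), (0:ℝ) ≤ v t := by
        filter_upwards [Ioo_mem_nhdsLT_of_mem (⟨hab, le_refl b⟩ : b ∈ Set.Ioc a b)] with t ht
        exact hvnn t (le_trans ha0 (le_of_lt ht.1))
      have hev : ∀ᶠ t in nhdsWithin b (Set.Iio b),
          v t ≤ C k * Real.exp (-(δ * t)) := by
        filter_upwards [Ioo_mem_nhdsLT_of_mem (⟨hab, le_refl b⟩ : b ∈ Set.Ioc a b)] with t ht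
        have h1 := hdec k t ⟨le_of_lt ht.1, ht.2⟩
        have h2 := Real.exp_pos (δ * t)
        rw [Real.exp_neg, ← div_eq_mul_inv, le_div_iff₀ h2]
        exact h1
      have hgt : Tendsto (fun t => C k * Real.exp (-(δ * t))) (nhdsWithin b (Set.Iio b))
          (nhds (C k * Real.exp (-(δ * b)))) :=
        ((continuous_const.mul
          (Real.continuous_exp.comp (continuous_const.mul continuous_id).neg)).tendsto b).mono_left
          nhdsWithin_le_nhds
      have h3 : liminf v (nhdsWithin b (Set.Iio b)) ≤ C k * Real.exp (-(δ * b)) := by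
        calc liminf v (nhdsWithin b (Set.Iio b))
            ≤ liminf (fun t => C k * Real.exp (-(δ * t))) (nhdsWithin b (Set.Iio b)) :=
              liminf_le_liminf hev
                (isBoundedUnder_of_eventually_ge hvev)
                hgt.isBoundedUnder_le.isCoboundedUnder_ge
          _ = C k * Real.exp (-(δ * b)) := hgt.liminf_eq
      have h4 : v b ≤ C k * Real.exp (-(δ * b)) :=
        le_trans (hjump (k+1) (Nat.succ_le_succ (Nat.zero_le k))) h3
      have h5 : Real.exp (-(δ * b)) * Real.exp (δ * b) = 1 := by
        rw [← Real.exp_add]; simp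
      have h6 : C (k+1) ≤ C k := by
        have := mul_le_mul_of_nonneg_right h4 (le_of_lt (Real.exp_pos (δ * b)))
        calc C (k+1) = v b * Real.exp (δ * b) := rfl
          _ ≤ C k * Real.exp (-(δ * b)) * Real.exp (δ * b) := this
          _ = C k := by rw [mul_assoc, h5, mul_one]
      exact le_trans h6 ih
  intro s hs
  have hex : ∃ n, s < tk n := (htop.eventually_gt_atTop s).exists
  have hns : s < tk (Nat.find hex) := Nat.find_spec hex
  have hn0 : Nat.find hex ≠ 0 := by
    intro h
    rw [h, ht0] at hns
    exact absurd hns (not_lt.mpr hs)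
  obtain ⟨m, hm⟩ := Nat.exists_eq_succ_of_ne_zero hn0
  rw [hm] at hns
  have hfm : m < Nat.find hex := by omega
  have hms : tk m ≤ s := le_of_not_gt (Nat.find_min hex hfm)
  have h1 : v s * Real.exp (δ * s) ≤ C m := hdec m s ⟨hms, hns⟩
  have h2 := Real.exp_pos (δ * s)
  rw [neg_mul, Real.exp_neg, ← div_eq_mul_inv, le_div_iff₀ h2]
  exact le_trans h1 (hCk m)
end
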